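/- For every nonzero real number a and every (x,y) ∈ ℝ², the map L̃ of Theorem 6.1 satisfies ⟨∂L̃/∂x, ∂L̃/∂x⟩ = 0, ⟨∂L̃/∂y, ∂L̃/∂y⟩ = 0, and ⟨∂L̃/∂x, ∂L̃/∂y⟩ = −1; that is, the induced metric of L̃ is the flat Lorentzian metric −dx⊗dy − dy⊗dx. -/

import Mathlib

/-!
With `θ = (x - a²y)/(2a)` and `φ = √3 (x + a²y)/(2a)`, the lift factors as
`L̃ = P(θ) · Γ(φ)`, where `P(θ) = (e^{iθ}, e^{-2iθ}, e^{iθ})` acts by a `b`-unitary diagonal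
matrix and `Γ(φ) = (√2 sinh φ, 1, √2 cosh φ)/√3`. Since `P(θ)` preserves `b`, the induced metric
in the coordinates `(θ, φ)` is `2 dθ² - (2/3) dφ²` (this uses `cosh² - sinh² = 1`), and
substituting the linear change of variables gives `-dx dy - dy dx`.
-/

open Complex

/-- The index-one Hermitian form `b(z,w) = −conj z₁ · w₁ + conj z₂ · w₂ + conj z₃ · w₃`
on `ℂ³`, over which the pseudo-sphere `S⁵₂(1) = {z : b(z,z) = 1}` and the Hopf
fibration `π : S⁵₂(1) → CP²₁(4)` are defined. -/
noncomputable def bSph (z w : ℂ × ℂ × ℂ) : ℂ :=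
  -(starRingEnd ℂ z.1) * w.1 + (starRingEnd ℂ z.2.1) * w.2.1
    + (starRingEnd ℂ z.2.2) * w.2.2

/-- The horizontal lift `L̃ : ℝ² → ℂ³` of Theorem 6.1 (the timelike first
coordinate carries the `sinh` factor). -/
noncomputable def Lcp (a x y : ℝ) : ℂ × ℂ × ℂ :=
  ((1 / Real.sqrt 3 : ℝ) : ℂ) •
    (((Real.sqrt 2 : ℝ) : ℂ) * Complex.exp (Complex.I * ((x - a ^ 2 * y : ℝ) : ℂ) / (2 * (a : ℂ)))
        * ((Real.sinh (Real.sqrt 3 * (x + a ^ 2 * y) / (2 * a)) : ℝ) : ℂ),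
     Complex.exp (Complex.I * ((a ^ 2 * y - x : ℝ) : ℂ) / (a : ℂ)),
     ((Real.sqrt 2 : ℝ) : ℂ) * Complex.exp (Complex.I * ((x - a ^ 2 * y : ℝ) : ℂ) / (2 * (a : ℂ)))
        * ((Real.cosh (Real.sqrt 3 * (x + a ^ 2 * y) / (2 * a)) : ℝ) : ℂ))

lemma bSph_eq_star_mul (z w : ℂ × ℂ × ℂ) :
    bSph z w = -(star z * w).1 + (star z * w).2.1 + (star z * w).2.2 := by
  simp only [bSph, neg_mul]; rfl

lemma bSph_mul_mul {c : ℂ × ℂ × ℂ} (hc : star c * c = 1) (z w : ℂ × ℂ × ℂ) :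
    bSph (c * z) (c * w) = bSph z w := by
  have h : star (c * z) * (c * w) = star z * w :=
    calc star (c * z) * (c * w) = (star c * c) * (star z * w) := by rw [star_mul']; ring
      _ = star z * w := by rw [hc, one_mul]
  rw [bSph_eq_star_mul, bSph_eq_star_mul, h]

noncomputable def hopfPhase (θ : ℝ) : ℂ × ℂ × ℂ :=
  (exp (θ * I), exp ((-2 * θ : ℝ) * I), exp (θ * I))

lemma star_hopfPhase_mul_self (θ : ℝ) : star (hopfPhase θ) * hopfPhase θ = 1 := by
  have h (r : ℝ) : star (exp (r * I)) * exp (r * I) = 1 := by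
    rw [Complex.star_def, conj_mul', norm_exp_ofReal_mul_I, ofReal_one, one_pow]
  simp only [hopfPhase, Prod.star_def, Prod.mk_mul_mk, h, Prod.mk_one_one]

noncomputable def hopfProfile (φ : ℝ) : ℂ × ℂ × ℂ :=
  (((√2 / √3 * Real.sinh φ : ℝ) : ℂ), ((1 / √3 : ℝ) : ℂ), ((√2 / √3 * Real.cosh φ : ℝ) : ℂ))

noncomputable def hopfProfileDeriv (φ : ℝ) : ℂ × ℂ × ℂ :=
  (((√2 / √3 * Real.cosh φ : ℝ) : ℂ), 0, ((√2 / √3 * Real.sinh φ : ℝ) : ℂ))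

def hopfOmega : ℂ × ℂ × ℂ := (I, -2 * I, I)

/-- The differential of `(θ, φ) ↦ hopfPhase θ * hopfProfile φ` applied to `(α, β)`. -/
noncomputable def hopfTangent (θ φ α β : ℝ) : ℂ × ℂ × ℂ :=
  hopfPhase θ * (α • hopfOmega * hopfProfile φ + β • hopfProfileDeriv φ)

lemma re_bSph (z w : ℂ × ℂ × ℂ) :
    (bSph z w).re = -(z.1.re * w.1.re + z.1.im * w.1.im) + (z.2.1.re * w.2.1.re + z.2.1.im * w.2.1.im)
      + (z.2.2.re * w.2.2.re + z.2.2.im * w.2.2.im) := by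
  simp only [bSph, add_re, mul_re, neg_re, neg_im, conj_re, conj_im]
  ring

lemma re_bSph_hopfTangent (θ φ α β α' β' : ℝ) :
    (bSph (hopfTangent θ φ α β) (hopfTangent θ φ α' β')).re = 2 * α * α' - 2 / 3 * β * β' := by
  rw [hopfTangent, hopfTangent, bSph_mul_mul (star_hopfPhase_mul_self θ), re_bSph]
  simp only [hopfOmega, hopfProfile, hopfProfileDeriv, Prod.smul_mk, Prod.mk_mul_mk, Prod.mk_add_mk,
    real_smul, add_re, add_im, mul_re, mul_im, ofReal_re, ofReal_im, I_re, I_im, zero_re, zero_im, neg_re, neg_im,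
    re_ofNat, im_ofNat]
  have h23 : (√2 / √3) ^ 2 = 2 / 3 := by rw [div_pow, Real.sq_sqrt, Real.sq_sqrt] <;> norm_num
  have h13 : (1 / √3) ^ 2 = 1 / 3 := by rw [div_pow, one_pow, Real.sq_sqrt]; norm_num
  linear_combination (√2 / √3) ^ 2 * (α * α' - β * β') * Real.cosh_sq_sub_sinh_sq φ
    + (α * α' - β * β') * h23 + 4 * α * α' * h13

lemma hasDerivAt_hopfPhase (θ : ℝ) : HasDerivAt hopfPhase (hopfPhase θ * hopfOmega) θ := by
  have h (c : ℝ) : HasDerivAt (fun t : ℝ => exp ((c * t : ℝ) * I)) (exp ((c * θ : ℝ) * I) * (c * I)) θ := by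
    simpa using (((hasDerivAt_id θ).const_mul c).ofReal_comp.mul_const I).cexp
  have h1 := h 1
  simp only [one_mul, ofReal_one] at h1
  refine (h1.prodMk ((h (-2)).prodMk h1)).congr_deriv ?_
  simp only [hopfPhase, hopfOmega, Prod.mk_mul_mk]
  push_cast
  ring_nf

lemma hasDerivAt_hopfProfile (φ : ℝ) : HasDerivAt hopfProfile (hopfProfileDeriv φ) φ := by
  have hs := ((Real.hasDerivAt_sinh φ).const_mul (√2 / √3)).ofReal_comp
  have hc := ((Real.hasDerivAt_cosh φ).const_mul (√2 / √3)).ofReal_comp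
  exact hs.prodMk ((hasDerivAt_const φ _).prodMk hc)

lemma HasDerivAt.hopfPhase_mul_hopfProfile {f g : ℝ → ℝ} {α β t : ℝ} (hf : HasDerivAt f α t)
    (hg : HasDerivAt g β t) :
    HasDerivAt (fun s => hopfPhase (f s) * hopfProfile (g s)) (hopfTangent (f t) (g t) α β) t := by
  refine (((hasDerivAt_hopfPhase _).scomp t hf).mul
    ((hasDerivAt_hopfProfile _).scomp t hg)).congr_deriv ?_
  simp only [hopfTangent, Function.comp_apply, Algebra.smul_def]
  ring

lemma Lcp_eq_hopfPhase_mul_hopfProfile (a x y : ℝ) :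
    Lcp a x y = hopfPhase ((x - a ^ 2 * y) / (2 * a)) * hopfProfile (√3 * (x + a ^ 2 * y) / (2 * a)) := by
  simp only [Lcp, hopfPhase, hopfProfile, Prod.smul_mk, Prod.mk_mul_mk, smul_eq_mul]
  refine Prod.ext ?_ (Prod.ext ?_ ?_) <;> push_cast <;> ring_nf

lemma HasDerivAt.Lcp (a : ℝ) {p q : ℝ → ℝ} {p' q' t : ℝ} (hp : HasDerivAt p p' t)
    (hq : HasDerivAt q q' t) :
    HasDerivAt (fun s => Lcp a (p s) (q s))
      (hopfTangent ((p t - a ^ 2 * q t) / (2 * a)) (√3 * (p t + a ^ 2 * q t) / (2 * a))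
        ((p' - a ^ 2 * q') / (2 * a)) (√3 * (p' + a ^ 2 * q') / (2 * a))) t := by
  simp only [Lcp_eq_hopfPhase_mul_hopfProfile]
  exact ((hp.sub (hq.const_mul _)).div_const _).hopfPhase_mul_hopfProfile
    (((hp.add (hq.const_mul _)).const_mul _).div_const _)

lemma re_bSph_Lcp_tangent {a : ℝ} (ha : a ≠ 0) (θ φ p₁ q₁ p₂ q₂ : ℝ) :
    (bSph (hopfTangent θ φ ((p₁ - a ^ 2 * q₁) / (2 * a)) (√3 * (p₁ + a ^ 2 * q₁) / (2 * a)))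
      (hopfTangent θ φ ((p₂ - a ^ 2 * q₂) / (2 * a)) (√3 * (p₂ + a ^ 2 * q₂) / (2 * a)))).re =
      -(p₁ * q₂ + q₁ * p₂) := by
  have h3 : √3 ^ 2 = 3 := Real.sq_sqrt (by norm_num)
  rw [re_bSph_hopfTangent]
  field_simp
  linear_combination -(p₁ + a ^ 2 * q₁) * (p₂ + a ^ 2 * q₂) * h3

/-- Theorem 6.1: the induced metric of `L̃` is the flat Lorentzian metric
`−dx⊗dy − dy⊗dx`. -/
theorem Lcp_induced_metric (a : ℝ) (ha : a ≠ 0) :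
    ∀ x y : ℝ,
      (bSph (deriv (fun t => Lcp a t y) x) (deriv (fun t => Lcp a t y) x)).re = 0 ∧
      (bSph (deriv (fun t => Lcp a x t) y) (deriv (fun t => Lcp a x t) y)).re = 0 ∧
      (bSph (deriv (fun t => Lcp a t y) x) (deriv (fun t => Lcp a x t) y)).re = -1 := by
  intro x y
  rw [((hasDerivAt_id' x).Lcp a (hasDerivAt_const x y)).deriv,
    ((hasDerivAt_const y x).Lcp a (hasDerivAt_id' y)).deriv]
  refine ⟨?_, ?_, ?_⟩ <;> rw [re_bSph_Lcp_tangent ha] <;> ring
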